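/- Let E, F be vector lattices with F Dedekind complete, T : E → F a positive abstract Uryson operator, and D ⊆ E an admissible set. Define π^D T (x) = sup{ Ty : y ⊑ x, y ∈ D }. Then π^D T is a positive abstract Uryson operator and π^D T is a fragment of T in the vector lattice U(E,F), i.e., π^D T ⊥ (T − π^D T). -/

import Mathlib

/-- Orthogonal additivity: `T (x + y) = T x + T y` whenever `|x| ⊓ |y| = 0`. -/
def OrthAdd {E F : Type*} [Lattice E] [AddCommGroup E] [AddCommGroup F]
    (T : E → F) : Prop :=
  ∀ x y : E, |x| ⊓ |y| = 0 → T (x + y) = T x + T y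

/-- `T` maps order bounded sets to order bounded sets. -/
def OrderBoundedMap {E F : Type*} [Preorder E] [Preorder F] (T : E → F) : Prop :=
  ∀ a b : E, ∃ c d : F, ∀ x ∈ Set.Icc a b, T x ∈ Set.Icc c d

/-- An abstract Uryson operator: orthogonally additive and order bounded. -/
def Uryson {E F : Type*} [Lattice E] [AddCommGroup E] [Lattice F] [AddCommGroup F]
    (T : E → F) : Prop :=
  OrthAdd T ∧ OrderBoundedMap T

/-- `z` is a fragment (component) of `x`: `z ⊥ (x - z)`. -/
def Fragment {E : Type*} [Lattice E] [AddCommGroup E] (z x : E) : Prop :=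
  |z| ⊓ |x - z| = 0

/-- A band (order) projection on a Dedekind complete vector lattice `F`:
additive, idempotent, and `0 ≤ ρ x ≤ x` for all `x ≥ 0`. -/
def IsBandProj {F : Type*} [Lattice F] [AddCommGroup F] (ρ : F → F) : Prop :=
  (∀ x y : F, ρ (x + y) = ρ x + ρ y) ∧ (∀ x, ρ (ρ x) = ρ x) ∧
    ∀ x : F, 0 ≤ x → 0 ≤ ρ x ∧ ρ x ≤ x

/-- Disjointness of two positive abstract Uryson operators `T, S` in `U(E,F)`:
`T ⊓ S = 0`, i.e. every abstract Uryson operator `R` with `R ≤ T` and `R ≤ S`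
(pointwise, which is the order of `U(E,F)`) satisfies `R ≤ 0`. -/
def UDisjointPos {E F : Type*} [Lattice E] [AddCommGroup E] [Lattice F] [AddCommGroup F]
    (T S : E → F) : Prop :=
  ∀ R : E → F, Uryson R → (∀ x, R x ≤ T x) → (∀ x, R x ≤ S x) → ∀ x, R x ≤ 0

/-- A subset `D` of a vector lattice is admissible if it contains every fragment of each
of its elements and is closed under sums of disjoint pairs of its elements. -/
def Admissible {E : Type*} [Lattice E] [AddCommGroup E] (D : Set E) : Prop :=
  (∀ x ∈ D, ∀ y : E, Fragment y x → y ∈ D) ∧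
    ∀ x ∈ D, ∀ y ∈ D, |x| ⊓ |y| = 0 → x + y ∈ D

/-!
Orthogonal additivity of `π^D T` rests on the Riesz decomposition of fragments: a fragment `z` of
`x + y` with `x ⊥ y` splits as `z₁ + z₂` with `z₁ ⊑ x`, `z₂ ⊑ y`, and conversely fragments of `x`
and of `y` add up to a fragment of `x + y`; admissibility keeps all these pieces in `D`. The
pieces are cut out by `z ↦ z⁺ ⊓ |x| - z⁻ ⊓ |x|`, applied to `z` and to `x + y - z`, and they fit
together because an element disjoint from itself vanishes.

For the disjointness, let `R ≤ π^D T` and `R ≤ T - π^D T`. For `y ⊑ x` in `D` we have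
`T y ≤ π^D T y`, so `R y ≤ 0` and `R x = R y + R (x - y) ≤ π^D T (x - y) ≤ π^D T x - T y`;
taking the supremum over `y` gives `R x ≤ 0`.
-/

section LatticeOrderedGroup

variable {α : Type*} [Lattice α] [AddCommGroup α] {a b c d u x y z z₁ z₂ : α}

/-- Disjointness, written `a ⊥ b`. -/
def AbsDisjoint (a b : α) : Prop :=
  |a| ⊓ |b| = 0

lemma AbsDisjoint.symm (h : AbsDisjoint a b) : AbsDisjoint b a := by
  rwa [AbsDisjoint, inf_comm]

lemma Fragment.sub (h : Fragment y x) : Fragment (x - y) x := by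
  rw [Fragment, sub_sub_cancel, inf_comm]
  exact h

lemma Fragment.of_add_left (h : AbsDisjoint a b) : Fragment a (a + b) := by
  rwa [Fragment, add_sub_cancel_left]

lemma Fragment.of_add_right (h : AbsDisjoint a b) : Fragment b (a + b) := by
  rw [add_comm]
  exact Fragment.of_add_left h.symm

variable [AddLeftMono α]

lemma eq_zero_of_abs_eq_zero (h : |a| = 0) : a = 0 :=
  le_antisymm (h ▸ le_abs_self a) (neg_nonpos.1 (h ▸ neg_le_abs a))

lemma abs_le_sup_abs_of_mem_Icc (hx : x ∈ Set.Icc a b) : |x| ≤ |a| ⊔ |b| :=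
  abs_le'.2 ⟨hx.2.trans ((le_abs_self b).trans le_sup_right),
    (neg_le_neg_iff.2 hx.1).trans ((neg_le_abs a).trans le_sup_left)⟩

lemma inf_add_le_inf_add_inf (ha : 0 ≤ a) (hb : 0 ≤ b) (hc : 0 ≤ c) :
    a ⊓ (b + c) ≤ a ⊓ b + a ⊓ c := by
  rw [inf_add, add_inf, add_inf]
  exact le_inf
    (le_inf (inf_le_left.trans (le_add_of_nonneg_right ha))
      (inf_le_left.trans (le_add_of_nonneg_right hc)))
    (le_inf (inf_le_left.trans (le_add_of_nonneg_left hb)) inf_le_right)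

lemma inf_add_inf_eq_of_le_add (ha : 0 ≤ a) (hb : 0 ≤ b) (hab : a ⊓ b = 0) (hc : 0 ≤ c)
    (hcab : c ≤ a + b) : c ⊓ a + c ⊓ b = c := by
  refine le_antisymm ?_ ?_
  · calc c ⊓ a + c ⊓ b = c ⊓ a ⊓ (c ⊓ b) + c ⊓ a ⊔ c ⊓ b := (inf_add_sup _ _).symm
      _ ≤ 0 + c :=
        add_le_add (hab ▸ inf_le_inf inf_le_right inf_le_right) (sup_le inf_le_left inf_le_left)
      _ = c := zero_add c
  · calc c = c ⊓ (a + b) := (inf_eq_left.2 hcab).symm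
      _ ≤ c ⊓ a + c ⊓ b := inf_add_le_inf_add_inf hc ha hb

lemma posPart_le_abs (a : α) : a⁺ ≤ |a| :=
  posPart_add_negPart a ▸ le_add_of_nonneg_right (negPart_nonneg a)

lemma negPart_le_abs (a : α) : a⁻ ≤ |a| :=
  posPart_add_negPart a ▸ le_add_of_nonneg_left (posPart_nonneg a)

namespace AbsDisjoint

lemma mono (h : AbsDisjoint x y) (ha : |a| ≤ |x|) (hb : |b| ≤ |y|) : AbsDisjoint a b :=
  le_antisymm (h ▸ inf_le_inf ha hb) (le_inf (abs_nonneg a) (abs_nonneg b))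

lemma of_abs_le_add (hb : AbsDisjoint a b) (hc : AbsDisjoint a c) (hd : |d| ≤ |b| + |c|) :
    AbsDisjoint a d := by
  refine le_antisymm ?_ (le_inf (abs_nonneg a) (abs_nonneg d))
  calc |a| ⊓ |d| ≤ |a| ⊓ (|b| + |c|) := inf_le_inf_left _ hd
    _ ≤ |a| ⊓ |b| + |a| ⊓ |c| := inf_add_le_inf_add_inf (abs_nonneg a) (abs_nonneg b) (abs_nonneg c)
    _ = 0 := by rw [hb, hc, add_zero]

lemma add_right (hb : AbsDisjoint a b) (hc : AbsDisjoint a c) : AbsDisjoint a (b + c) :=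
  hb.of_abs_le_add hc (abs_add_le b c)

lemma sub_right (hb : AbsDisjoint a b) (hc : AbsDisjoint a c) : AbsDisjoint a (b - c) :=
  hb.of_abs_le_add hc (by simpa only [sub_eq_add_neg, abs_neg] using abs_add_le b (-c))

lemma eq_zero_of_self (h : AbsDisjoint a a) : a = 0 :=
  eq_zero_of_abs_eq_zero ((inf_idem _).symm.trans h)

lemma abs_add (h : AbsDisjoint a b) : |a + b| = |a| + |b| := by
  refine le_antisymm (abs_add_le a b) ?_
  have key : ∀ u v : α, AbsDisjoint u v → |u| ≤ |u + v| := fun u v huv ↦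
    calc |u| = |u| ⊓ (|u + v| + |v|) := by
          refine (inf_eq_left.2 ?_).symm
          simpa only [add_neg_cancel_right, abs_neg] using abs_add_le (u + v) (-v)
      _ ≤ |u| ⊓ |u + v| + |u| ⊓ |v| :=
          inf_add_le_inf_add_inf (abs_nonneg u) (abs_nonneg _) (abs_nonneg v)
      _ ≤ |u + v| := by rw [huv, add_zero]; exact inf_le_right
  calc |a| + |b| = |a| ⊔ |b| := by rw [← inf_add_sup, h, zero_add]
    _ ≤ |a + b| := sup_le (key a b h) (add_comm b a ▸ key b a h.symm)

end AbsDisjoint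

namespace Fragment

lemma refl (x : α) : Fragment x x := by
  simp only [Fragment, sub_self, abs_zero, inf_eq_right.2 (abs_nonneg x)]

lemma zero_left (x : α) : Fragment 0 x := by
  simp only [Fragment, sub_zero, abs_zero, inf_eq_left.2 (abs_nonneg x)]

lemma abs_le (h : Fragment y x) : |y| ≤ |x| :=
  calc |y| ≤ |y| + |x - y| := le_add_of_nonneg_right (abs_nonneg _)
    _ = |x| := by rw [← AbsDisjoint.abs_add h, add_sub_cancel]

lemma add (h₁ : Fragment z₁ x) (h₂ : Fragment z₂ y) (hxy : AbsDisjoint x y) :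
    Fragment (z₁ + z₂) (x + y) := by
  have h₁x : |z₁| ≤ |x| := h₁.abs_le
  have h₂y : |z₂| ≤ |y| := h₂.abs_le
  have hx₁ : |x - z₁| ≤ |x| := h₁.sub.abs_le
  have hy₂ : |y - z₂| ≤ |y| := h₂.sub.abs_le
  have hz₁ : AbsDisjoint z₁ (x - z₁ + (y - z₂)) := AbsDisjoint.add_right h₁ (hxy.mono h₁x hy₂)
  have hz₂ : AbsDisjoint z₂ (x - z₁ + (y - z₂)) :=
    AbsDisjoint.add_right (hxy.symm.mono h₂y hx₁) h₂
  rw [Fragment, add_sub_add_comm]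
  exact (hz₁.symm.add_right hz₂.symm).symm

end Fragment

/-- When `|u| ≤ a + b` with `a, b ≥ 0` disjoint, `bandComponent a u` is the component of `u`
in the band generated by `a`. -/
def bandComponent (a u : α) : α :=
  u⁺ ⊓ a - u⁻ ⊓ a

lemma abs_bandComponent_le (ha : 0 ≤ a) (u : α) : |bandComponent a u| ≤ |u| ⊓ a := by
  have hp : 0 ≤ u⁺ ⊓ a := le_inf (posPart_nonneg u) ha
  have hn : 0 ≤ u⁻ ⊓ a := le_inf (negPart_nonneg u) ha
  have hpn : u⁺ ⊓ a ⊓ (u⁻ ⊓ a) = 0 :=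
    le_antisymm (posPart_inf_negPart_eq_zero u ▸ inf_le_inf inf_le_left inf_le_left) (le_inf hp hn)
  calc |bandComponent a u| ≤ |u⁺ ⊓ a| + |u⁻ ⊓ a| := by
        simpa only [bandComponent, sub_eq_add_neg, abs_neg] using abs_add_le (u⁺ ⊓ a) (-(u⁻ ⊓ a))
    _ = u⁺ ⊓ a ⊔ u⁻ ⊓ a := by
        rw [abs_of_nonneg hp, abs_of_nonneg hn, ← inf_add_sup, hpn, zero_add]
    _ ≤ |u| ⊓ a := sup_le (inf_le_inf_right a (posPart_le_abs u))
        (inf_le_inf_right a (negPart_le_abs u))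

lemma bandComponent_add_bandComponent (ha : 0 ≤ a) (hb : 0 ≤ b) (hab : a ⊓ b = 0)
    (hu : |u| ≤ a + b) : bandComponent a u + bandComponent b u = u := by
  have hpos := inf_add_inf_eq_of_le_add ha hb hab (posPart_nonneg u) ((posPart_le_abs u).trans hu)
  have hneg := inf_add_inf_eq_of_le_add ha hb hab (negPart_nonneg u) ((negPart_le_abs u).trans hu)
  calc bandComponent a u + bandComponent b u
      = (u⁺ ⊓ a + u⁺ ⊓ b) - (u⁻ ⊓ a + u⁻ ⊓ b) := by unfold bandComponent; abel
    _ = u := by rw [hpos, hneg, posPart_sub_negPart]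

/-- Riesz decomposition for fragments. -/
theorem Fragment.exists_add_eq (hxy : AbsDisjoint x y) (hz : Fragment z (x + y)) :
    ∃ z₁ z₂, z₁ + z₂ = z ∧ Fragment z₁ x ∧ Fragment z₂ y ∧ AbsDisjoint z₁ z₂ := by
  set w := x + y - z
  have hzw : AbsDisjoint z w := hz
  have hsplit : ∀ u, |u| ≤ |x + y| →
      bandComponent |x| u + bandComponent |y| u = u ∧
        |bandComponent |x| u| ≤ |u| ⊓ |x| ∧ |bandComponent |y| u| ≤ |u| ⊓ |y| := fun u hu ↦
    ⟨bandComponent_add_bandComponent (abs_nonneg x) (abs_nonneg y) hxy (hxy.abs_add ▸ hu),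
      abs_bandComponent_le (abs_nonneg x) u, abs_bandComponent_le (abs_nonneg y) u⟩
  obtain ⟨hz_eq, hz₁, hz₂⟩ := hsplit z hz.abs_le
  obtain ⟨hw_eq, hw₁, hw₂⟩ := hsplit w hz.sub.abs_le
  set z₁ := bandComponent |x| z
  set z₂ := bandComponent |y| z
  set w₁ := bandComponent |x| w
  set w₂ := bandComponent |y| w
  have hsum : (z₁ + w₁) + (z₂ + w₂) = x + y := by
    calc (z₁ + w₁) + (z₂ + w₂) = (z₁ + z₂) + (w₁ + w₂) := add_add_add_comm _ _ _ _
      _ = x + y := by rw [hz_eq, hw_eq, add_sub_cancel]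
  -- `x - (z₁ + w₁) = z₂ + w₂ - y` is disjoint from `x`, hence from `z₁` and `w₁`, hence from itself.
  have hx_eq : z₁ + w₁ = x := by
    have hd : x - (z₁ + w₁) = z₂ + w₂ - y := by
      rw [sub_eq_sub_iff_add_eq_add, add_comm (z₂ + w₂), hsum]
    have hdx : AbsDisjoint (x - (z₁ + w₁)) x := by
      rw [hd]
      exact ((hxy.mono le_rfl (hz₂.trans inf_le_right)).add_right
        (hxy.mono le_rfl (hw₂.trans inf_le_right))).sub_right hxy |>.symm
    have hdd : AbsDisjoint (x - (z₁ + w₁)) (x - (z₁ + w₁)) :=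
      hdx.sub_right ((hdx.mono le_rfl (hz₁.trans inf_le_right)).add_right
        (hdx.mono le_rfl (hw₁.trans inf_le_right)))
    exact (sub_eq_zero.1 hdd.eq_zero_of_self).symm
  have hy_eq : z₂ + w₂ = y := by
    rw [hx_eq] at hsum
    exact add_left_cancel hsum
  refine ⟨z₁, z₂, hz_eq, ?_, ?_, hxy.mono (hz₁.trans inf_le_right) (hz₂.trans inf_le_right)⟩
  · rw [← hx_eq]
    exact Fragment.of_add_left (hzw.mono (hz₁.trans inf_le_left) (hw₁.trans inf_le_left))
  · rw [← hy_eq]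
    exact Fragment.of_add_left (hzw.mono (hz₂.trans inf_le_left) (hw₂.trans inf_le_left))

end LatticeOrderedGroup

section OrthAdd

variable {E F : Type*} [Lattice E] [AddCommGroup E] [AddCommGroup F] {T : E → F} {x y : E}

lemma OrthAdd.map_zero (hT : OrthAdd T) : T 0 = 0 := by
  simpa using hT 0 0 (by simp [abs])

lemma OrthAdd.map_add_sub (hT : OrthAdd T) (h : Fragment y x) : T y + T (x - y) = T x := by
  simpa using (hT y (x - y) h).symm

end OrthAdd

section FragmentSup

variable {E F : Type*} [Lattice E] [AddCommGroup E] {x y : E}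
  [ConditionallyCompleteLattice F] {D : Set E} {T : E → F} {c : F}

variable (D T) in
def fragmentValues (x : E) : Set F :=
  {v : F | ∃ y : E, Fragment y x ∧ y ∈ D ∧ v = T y}

variable (D T) in
/-- The operator `π^D T`. -/
def fragmentSup (x : E) : F :=
  sSup (fragmentValues D T x)

variable [AddLeftMono E]

lemma OrderBoundedMap.exists_forall_abs_le (hT : OrderBoundedMap T) (a : E) :
    ∃ d, ∀ y, |y| ≤ a → T y ≤ d := by
  obtain ⟨_, d, hd⟩ := hT (-a) a
  exact ⟨d, fun y hy ↦ (hd y ⟨neg_le.1 (abs_le'.1 hy).2, (abs_le'.1 hy).1⟩).2⟩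

lemma bddAbove_fragmentValues (hT : OrderBoundedMap T) (x : E) :
    BddAbove (fragmentValues D T x) := by
  obtain ⟨d, hd⟩ := hT.exists_forall_abs_le |x|
  exact ⟨d, by rintro _ ⟨y, hy, -, rfl⟩; exact hd y hy.abs_le⟩

lemma le_fragmentSup (hT : OrderBoundedMap T) (h : Fragment y x) (hy : y ∈ D) :
    T y ≤ fragmentSup D T x :=
  le_csSup (bddAbove_fragmentValues hT x) ⟨y, h, hy, rfl⟩

variable [AddCommGroup F]

lemma fragmentSup_le (hT : OrthAdd T) (hD0 : (0 : E) ∈ D)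
    (h : ∀ y, Fragment y x → y ∈ D → T y ≤ c) : fragmentSup D T x ≤ c :=
  csSup_le ⟨0, 0, Fragment.zero_left x, hD0, hT.map_zero.symm⟩
    (by rintro _ ⟨y, hy, hyD, rfl⟩; exact h y hy hyD)

lemma fragmentSup_nonneg (hT : Uryson T) (hD0 : (0 : E) ∈ D) (x : E) :
    0 ≤ fragmentSup D T x :=
  hT.1.map_zero ▸ le_fragmentSup hT.2 (Fragment.zero_left x) hD0

variable [AddLeftMono F]

lemma fragmentSup_add_le (hT : Uryson T) (hD : Admissible D) (hD0 : (0 : E) ∈ D)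
    (hxy : AbsDisjoint x y) :
    fragmentSup D T (x + y) ≤ fragmentSup D T x + fragmentSup D T y := by
  refine fragmentSup_le hT.1 hD0 fun z hz hzD ↦ ?_
  obtain ⟨z₁, z₂, rfl, hz₁, hz₂, hz₁₂⟩ := hz.exists_add_eq hxy
  rw [hT.1 z₁ z₂ hz₁₂]
  exact add_le_add (le_fragmentSup hT.2 hz₁ (hD.1 _ hzD z₁ (Fragment.of_add_left hz₁₂)))
    (le_fragmentSup hT.2 hz₂ (hD.1 _ hzD z₂ (Fragment.of_add_right hz₁₂)))

lemma add_fragmentSup_le (hT : Uryson T) (hD : Admissible D) (hD0 : (0 : E) ∈ D)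
    (hxy : AbsDisjoint x y) :
    fragmentSup D T x + fragmentSup D T y ≤ fragmentSup D T (x + y) := by
  rw [← le_sub_iff_add_le]
  refine fragmentSup_le hT.1 hD0 fun z₁ hz₁ hz₁D ↦ ?_
  rw [le_sub_comm]
  refine fragmentSup_le hT.1 hD0 fun z₂ hz₂ hz₂D ↦ ?_
  rw [le_sub_iff_add_le']
  have hz₁₂ : AbsDisjoint z₁ z₂ := hxy.mono hz₁.abs_le hz₂.abs_le
  rw [← hT.1 z₁ z₂ hz₁₂]
  exact le_fragmentSup hT.2 (hz₁.add hz₂ hxy) (hD.2 z₁ hz₁D z₂ hz₂D hz₁₂)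

lemma uryson_fragmentSup (hT : Uryson T) (hD : Admissible D) (hD0 : (0 : E) ∈ D) :
    Uryson (fragmentSup D T) := by
  refine ⟨fun x y hxy ↦ le_antisymm (fragmentSup_add_le hT hD hD0 hxy)
    (add_fragmentSup_le hT hD hD0 hxy), fun a b ↦ ?_⟩
  obtain ⟨d, hd⟩ := hT.2.exists_forall_abs_le (|a| ⊔ |b|)
  refine ⟨0, d, fun x hx ↦ ⟨fragmentSup_nonneg hT hD0 x, fragmentSup_le hT.1 hD0 fun y hy _ ↦ ?_⟩⟩
  exact hd y (hy.abs_le.trans (abs_le_sup_abs_of_mem_Icc hx))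

lemma uDisjointPos_fragmentSup (hT : Uryson T) (hD : Admissible D) (hD0 : (0 : E) ∈ D) :
    UDisjointPos (fragmentSup D T) (fun x ↦ T x - fragmentSup D T x) := by
  intro R hR hRP hRT x
  have hTy_le : ∀ y, Fragment y x → y ∈ D → T y ≤ fragmentSup D T x - R x := by
    intro y hy hyD
    have hTy : T y ≤ fragmentSup D T y := le_fragmentSup hT.2 (Fragment.refl y) hyD
    have hPsplit := (uryson_fragmentSup hT hD hD0).1.map_add_sub hy
    refine le_sub_comm.1 ?_
    calc R x = R y + R (x - y) := (hR.1.map_add_sub hy).symm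
      _ ≤ 0 + fragmentSup D T (x - y) :=
          add_le_add ((hRT y).trans (sub_nonpos.2 hTy)) (hRP (x - y))
      _ = fragmentSup D T x - fragmentSup D T y := by rw [← hPsplit]; abel
      _ ≤ fragmentSup D T x - T y := sub_le_sub_left hTy _
  exact (le_sub_self_iff _).1 (fragmentSup_le hT.1 hD0 hTy_le)

end FragmentSup

theorem stmt13_general {E F : Type} [Lattice E] [AddCommGroup E]
    [CovariantClass E E (· + ·) (· ≤ ·)]
    [ConditionallyCompleteLattice F] [AddCommGroup F]
    [CovariantClass F F (· + ·) (· ≤ ·)]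
    (T : E → F) (hT : Uryson T)
    (D : Set E) (hD : Admissible D) (hD0 : (0 : E) ∈ D)
    (P : E → F) (hP : ∀ x, P x = sSup {v : F | ∃ y : E, Fragment y x ∧ y ∈ D ∧ v = T y}) :
    Uryson P ∧ (∀ x, 0 ≤ P x) ∧ UDisjointPos P (fun x => T x - P x) := by
  obtain rfl : P = fragmentSup D T := funext hP
  exact ⟨uryson_fragmentSup hT hD hD0, fragmentSup_nonneg hT hD0,
    uDisjointPos_fragmentSup hT hD hD0⟩

/-- For a positive abstract Uryson operator `T : E → F` (`F` Dedekind complete) and an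
admissible set `D ⊆ E`, the operator `π^D T : x ↦ sup { T y : y ⊑ x, y ∈ D }` is a
positive abstract Uryson operator and a fragment of `T` in `U(E,F)`, i.e.
`π^D T ⊥ (T - π^D T)`. -/
theorem stmt13 {E F : Type} [Lattice E] [AddCommGroup E]
    [CovariantClass E E (· + ·) (· ≤ ·)] [Module ℝ E]
    [ConditionallyCompleteLattice F] [AddCommGroup F]
    [CovariantClass F F (· + ·) (· ≤ ·)] [Module ℝ F]
    (T : E → F) (hT : Uryson T) (hTpos : ∀ x, 0 ≤ T x)
    (D : Set E) (hD : Admissible D) (hD0 : (0 : E) ∈ D)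
    (P : E → F) (hP : ∀ x, P x = sSup {v : F | ∃ y : E, Fragment y x ∧ y ∈ D ∧ v = T y}) :
    Uryson P ∧ (∀ x, 0 ≤ P x) ∧ UDisjointPos P (fun x => T x - P x) :=
  stmt13_general T hT D hD hD0 P hP
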